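/- arXiv:1710.11073 — 3 statements merged into one kernel-verified Lean document; each statement's English description precedes it below -/
import Mathlib

section
/- Suppose φ₁, φ₂, φ₃, φ₄ > 0 with φ₁ + φ₂ + φ₃ + φ₄ = π, φ₁ = max(φ₁, φ₂, φ₃, φ₄), and the identity cos(φ₂ − φ₄) + cos(φ₂ + φ₄) + cos(2φ₁ + φ₂ + φ₄) = 0 holds. Then max(φ₂, φ₄) ≥ π/4. -/
open Real

theorem stmt_6 (φ₁ φ₂ φ₃ φ₄ : ℝ)
    (h₁ : 0 < φ₁) (h₂ : 0 < φ₂) (h₃ : 0 < φ₃) (h₄ : 0 < φ₄)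
    (hsum : φ₁ + φ₂ + φ₃ + φ₄ = π)
    (hmax : φ₁ = max (max φ₁ φ₂) (max φ₃ φ₄))
    (hid : Real.cos (φ₂ - φ₄) + Real.cos (φ₂ + φ₄) + Real.cos (2 * φ₁ + φ₂ + φ₄) = 0) :
    π / 4 ≤ max φ₂ φ₄ := by
  by_contra hc
  push_neg at hc
  have hb2 : φ₂ < π / 4 := lt_of_le_of_lt (le_max_left _ _) hc
  have hb4 : φ₄ < π / 4 := lt_of_le_of_lt (le_max_right _ _) hc
  have hpi : π / 4 ≤ π := by linarith [Real.pi_pos]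
  have hc2 : Real.cos (π / 4) < Real.cos φ₂ :=
    Real.cos_lt_cos_of_nonneg_of_le_pi h₂.le hpi hb2
  have hc4 : Real.cos (π / 4) < Real.cos φ₄ :=
    Real.cos_lt_cos_of_nonneg_of_le_pi h₄.le hpi hb4
  rw [Real.cos_pi_div_four] at hc2 hc4
  have hs : (0:ℝ) < Real.sqrt 2 / 2 := by positivity
  have hmul : 1 / 2 < Real.cos φ₂ * Real.cos φ₄ := by
    have := mul_lt_mul' hc2.le hc4 hs.le (lt_of_lt_of_le hs hc2.le)
    have hsq : Real.sqrt 2 / 2 * (Real.sqrt 2 / 2) = 1 / 2 := by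
      rw [div_mul_div_comm, Real.mul_self_sqrt (by norm_num)]; norm_num
    linarith
  have hprod : Real.cos (φ₂ - φ₄) + Real.cos (φ₂ + φ₄)
      = 2 * (Real.cos φ₂ * Real.cos φ₄) := by
    rw [Real.cos_sub, Real.cos_add]; ring
  have hge : -1 ≤ Real.cos (2 * φ₁ + φ₂ + φ₄) := Real.neg_one_le_cos _
  linarith
end

section
/- Let k ≥ 1, let α₁, …, α_k ∈ ℝ, let xᵢ = (cos αᵢ, sin αᵢ) ∈ ℝ², and suppose there exist positive reals c₁, …, c_k with ∑ᵢ cᵢ xᵢ = 0 and ∑ᵢ cᵢ (xᵢ ⊗ xᵢ) = Id (the 2×2 identity matrix). Then, writing vᵢ = (cos αᵢ, sin αᵢ, cos 2αᵢ, sin 2αᵢ) ∈ ℝ⁴, the origin of ℝ⁴ lies in the convex hull of {v₁, …, v_k}. -/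
open Real

theorem stmt_8 (k : ℕ) (hk : 1 ≤ k) (α : Fin k → ℝ)
    (x : Fin k → Fin 2 → ℝ)
    (hx : ∀ i, x i = ![Real.cos (α i), Real.sin (α i)])
    (c : Fin k → ℝ) (hc : ∀ i, 0 < c i)
    (h1 : ∑ i, c i • x i = 0)
    (h2 : ∑ i, c i • (Matrix.of fun a b => x i a * x i b) =
      (1 : Matrix (Fin 2) (Fin 2) ℝ)) :
    (0 : Fin 4 → ℝ) ∈ convexHull ℝ
      {v : Fin 4 → ℝ | ∃ i : Fin k,
        v = ![Real.cos (α i), Real.sin (α i),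
              Real.cos (2 * α i), Real.sin (2 * α i)]} := by
  have hx0 : ∀ i, x i 0 = Real.cos (α i) := fun i => by rw [hx]; rfl
  have hx1 : ∀ i, x i 1 = Real.sin (α i) := fun i => by rw [hx]; rfl
  have e1 : ∑ i, c i * Real.cos (α i) = 0 := by
    have := congrFun h1 0
    simpa [Finset.sum_apply, hx0] using this
  have e2 : ∑ i, c i * Real.sin (α i) = 0 := by
    have := congrFun h1 1
    simpa [Finset.sum_apply, hx1] using this
  have e00 : ∑ i, c i * (Real.cos (α i) * Real.cos (α i)) = 1 := by
    have := congrFun (congrFun h2 0) 0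
    simpa [Matrix.sum_apply, Matrix.one_apply, hx0] using this
  have e11 : ∑ i, c i * (Real.sin (α i) * Real.sin (α i)) = 1 := by
    have := congrFun (congrFun h2 1) 1
    simpa [Matrix.sum_apply, Matrix.one_apply, hx1] using this
  have e01 : ∑ i, c i * (Real.cos (α i) * Real.sin (α i)) = 0 := by
    have := congrFun (congrFun h2 0) 1
    simpa [Matrix.sum_apply, Matrix.one_apply, hx0, hx1] using this
  have hsum : ∑ i, c i = 2 := by
    have : ∑ i, (c i * (Real.cos (α i) * Real.cos (α i))
        + c i * (Real.sin (α i) * Real.sin (α i))) = 2 := by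
      rw [Finset.sum_add_distrib, e00, e11]; norm_num
    calc ∑ i, c i = ∑ i, (c i * (Real.cos (α i) * Real.cos (α i))
        + c i * (Real.sin (α i) * Real.sin (α i))) := by
          refine Finset.sum_congr rfl fun i _ => ?_
          have h : Real.cos (α i) * Real.cos (α i)
              + Real.sin (α i) * Real.sin (α i) = 1 := by
            have := Real.sin_sq_add_cos_sq (α i); nlinarith [this]
          linear_combination (-(c i)) * h
      _ = 2 := this
  set v : Fin k → Fin 4 → ℝ := fun i =>
    ![Real.cos (α i), Real.sin (α i), Real.cos (2 * α i), Real.sin (2 * α i)]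
  have key : Finset.univ.centerMass c v = 0 := by
    rw [Finset.centerMass, hsum]
    have : ∑ i, c i • v i = 0 := by
      funext a
      rw [Finset.sum_apply]
      fin_cases a
      · simpa [v] using e1
      · simpa [v] using e2
      · have : ∀ i, c i * Real.cos (2 * α i)
            = 2 * (c i * (Real.cos (α i) * Real.cos (α i))) - c i := by
          intro i; rw [Real.cos_two_mul]; ring
        show ∑ i, c i * Real.cos (2 * α i) = 0
        rw [Finset.sum_congr rfl fun i _ => this i, Finset.sum_sub_distrib,
          ← Finset.mul_sum, e00, hsum]
        norm_num
      · have : ∀ i, c i * Real.sin (2 * α i)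
            = 2 * (c i * (Real.cos (α i) * Real.sin (α i))) := by
          intro i; rw [Real.sin_two_mul]; ring
        show ∑ i, c i * Real.sin (2 * α i) = 0
        rw [Finset.sum_congr rfl fun i _ => this i, ← Finset.mul_sum, e01]
        norm_num
    rw [this, smul_zero]
  rw [← key]
  exact Finset.centerMass_mem_convexHull _ (fun i _ => (hc i).le)
    (by rw [hsum]; norm_num) (fun i _ => ⟨i, rfl⟩)
end

section
/- Let 0 ≤ α₁ < α₂ < … < α_k < 2π and suppose the origin of ℝ⁴ lies in the convex hull of the points vᵢ = (cos αᵢ, sin αᵢ, cos 2αᵢ, sin 2αᵢ), i = 1,…,k. Setting α_{k+1} = α₁ + 2π, one has α_{i+1} − αᵢ ≤ 2π/3 for every i = 1, …, k. -/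
open Real

lemma exists_t_aux (m : ℝ) (hm : -(1/2) < m) :
    ∃ t : ℝ, 0 < t ∧ ∀ x : ℝ, m ≤ x → x ≤ 1 → 0 < x + t * (1 - 2*x^2) := by
  rcases le_or_gt 0 m with h | h
  · refine ⟨1/2, by norm_num, fun x hx hx1 => ?_⟩
    have hx0 : 0 ≤ x := le_trans h hx
    nlinarith [mul_nonneg hx0 (sub_nonneg.2 hx1)]
  · have h1 : 0 < 1 - 2*m^2 := by nlinarith
    have hnum : 0 < 1 - 2*m^2 - m := by nlinarith
    refine ⟨(1 - 2*m^2 - m) / (2*(1 - 2*m^2)), div_pos hnum (by linarith), fun x hx hx1 => ?_⟩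
    have key : 0 < 2*(1-2*m^2)*x + (1-2*m^2-m)*(1-2*x^2) := by
      have hPm : 0 < (1-2*m^2)*(2*m+1)*(1-m) :=
        mul_pos (mul_pos h1 (by linarith)) (by linarith)
      have hP1 : 0 < (1+2*m)*(1-m) := by nlinarith
      nlinarith [mul_nonneg (sub_nonneg.2 hx) (sub_nonneg.2 hx1),
        mul_nonneg (mul_nonneg (sub_nonneg.2 hx) (sub_nonneg.2 hx1)) hnum.le,
        mul_nonneg (sub_nonneg.2 hx1) hPm.le,
        mul_nonneg (sub_nonneg.2 hx) hP1.le]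
    have heq : x + (1 - 2*m^2 - m) / (2*(1 - 2*m^2)) * (1 - 2*x^2)
        = (2*(1-2*m^2)*x + (1-2*m^2-m)*(1-2*x^2)) / (2*(1 - 2*m^2)) := by
      field_simp
    rw [heq]
    exact div_pos key (by linarith)

lemma key_lemma (k : ℕ) (α : Fin k → ℝ) (μ β : ℝ) (hβ0 : 0 ≤ β) (hβ : β < 2*π/3)
    (harc : ∀ i : Fin k, ∃ n : ℤ, |α i + n * (2*π) - μ| ≤ β)
    (hhull : (0 : Fin 4 → ℝ) ∈ convexHull ℝ
      {v : Fin 4 → ℝ | ∃ i : Fin k,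
        v = ![Real.cos (α i), Real.sin (α i),
              Real.cos (2 * α i), Real.sin (2 * α i)]}) : False := by
  have hπ : 0 < π := Real.pi_pos
  have hβπ : β ≤ π := by linarith
  have hm : -(1/2) < Real.cos β := by
    have h23 : Real.cos (2*π/3) = -(1/2) := by
      have : (2*π/3) = π - π/3 := by ring
      rw [this, Real.cos_pi_sub, Real.cos_pi_div_three]
    rw [← h23]
    exact Real.cos_lt_cos_of_nonneg_of_le_pi hβ0 (by linarith) hβ
  obtain ⟨t, ht, hq⟩ := exists_t_aux (Real.cos β) hm
  set f : (Fin 4 → ℝ) → ℝ := fun v =>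
    Real.cos μ * v 0 + Real.sin μ * v 1 - t * Real.cos (2*μ) * v 2 - t * Real.sin (2*μ) * v 3
    with hf
  have hlin : IsLinearMap ℝ f := by
    constructor
    · intro x y; simp only [hf, Pi.add_apply]; ring
    · intro c x; simp only [hf, Pi.smul_apply, smul_eq_mul]; ring
  have hconv : Convex ℝ {w : Fin 4 → ℝ | 0 < f w} := convex_halfSpace_gt hlin 0
  have hsub : {v : Fin 4 → ℝ | ∃ i : Fin k,
      v = ![Real.cos (α i), Real.sin (α i),
            Real.cos (2 * α i), Real.sin (2 * α i)]} ⊆ {w | 0 < f w} := by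
    rintro v ⟨i, rfl⟩
    obtain ⟨n, hn⟩ := harc i
    set φ := α i + n * (2*π) - μ with hφ
    have hc1 : Real.cos (α i - μ) = Real.cos φ := by
      have : φ = (α i - μ) + n * (2*π) := by rw [hφ]; ring
      rw [this, Real.cos_add_int_mul_two_pi]
    have hc2 : Real.cos (2*α i - 2*μ) = Real.cos (2*φ) := by
      have : 2*φ = (2*α i - 2*μ) + ((2*n : ℤ) : ℝ) * (2*π) := by rw [hφ]; push_cast; ring
      rw [this, Real.cos_add_int_mul_two_pi]
    have hxm : Real.cos β ≤ Real.cos φ := by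
      rw [← Real.cos_abs φ]
      exact Real.cos_le_cos_of_nonneg_of_le_pi (abs_nonneg _) hβπ hn
    have hx1 : Real.cos φ ≤ 1 := Real.cos_le_one φ
    have hpos := hq (Real.cos φ) hxm hx1
    show 0 < f _
    have hfv : f ![Real.cos (α i), Real.sin (α i),
        Real.cos (2 * α i), Real.sin (2 * α i)]
        = Real.cos (α i - μ) - t * Real.cos (2*α i - 2*μ) := by
      simp only [hf, Matrix.cons_val_zero, Matrix.cons_val_one, Matrix.head_cons,
        Matrix.cons_val_two, Matrix.tail_cons, Matrix.cons_val_three]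
      rw [Real.cos_sub, Real.cos_sub]
      ring_nf
    rw [hfv, hc1, hc2, Real.cos_two_mul]
    nlinarith [hpos]
  have h0mem : (0 : Fin 4 → ℝ) ∈ {w : Fin 4 → ℝ | 0 < f w} :=
    convexHull_min hsub hconv hhull
  have : f 0 = 0 := by simp [hf]
  rw [Set.mem_setOf_eq, this] at h0mem
  exact lt_irrefl 0 h0mem

theorem stmt_11 (k : ℕ) (hk : 1 ≤ k) (α : Fin k → ℝ)
    (hmono : StrictMono α)
    (h0 : 0 ≤ α ⟨0, hk⟩) (h2 : α ⟨k - 1, by omega⟩ < 2 * π)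
    (hhull : (0 : Fin 4 → ℝ) ∈ convexHull ℝ
      {v : Fin 4 → ℝ | ∃ i : Fin k,
        v = ![Real.cos (α i), Real.sin (α i),
              Real.cos (2 * α i), Real.sin (2 * α i)]}) :
    (∀ i : Fin k, ∀ h : i.val + 1 < k, α ⟨i.val + 1, h⟩ - α i ≤ 2 * π / 3) ∧
      α ⟨0, hk⟩ + 2 * π - α ⟨k - 1, by omega⟩ ≤ 2 * π / 3 := by
  have hπ : 0 < π := Real.pi_pos
  have hlow : ∀ j : Fin k, α ⟨0, hk⟩ ≤ α j := by
    intro j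
    exact hmono.monotone (by simp [Fin.le_def])
  have hhigh : ∀ j : Fin k, α j ≤ α ⟨k - 1, by omega⟩ := by
    intro j
    apply hmono.monotone
    rw [Fin.le_def]
    simp only
    omega
  constructor
  · intro i h
    by_contra hcon
    push_neg at hcon
    -- gap between α i and α ⟨i+1⟩ exceeds 2π/3
    set L := α ⟨i.val + 1, h⟩ with hL
    set U := α i + 2*π with hU
    have hLU : U - L < 4*π/3 := by
      have := hlow i
      rw [hU, hL]
      linarith
    have hLleU : L ≤ U := by
      have h1 := hhigh ⟨i.val + 1, h⟩
      have h2' := hlow i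
      rw [hL, hU]; linarith
    apply key_lemma k α ((L+U)/2) ((U-L)/2) (by linarith) (by linarith) ?_ hhull
    intro j
    rcases le_or_gt (j : ℕ) (i : ℕ) with hj | hj
    · -- θ = α j + 2π
      refine ⟨1, ?_⟩
      have hji : α j ≤ α i := hmono.monotone (by rwa [Fin.le_def])
      have hj0 : α ⟨0, hk⟩ ≤ α j := hlow j
      have hjK : α ⟨i.val + 1, h⟩ ≤ α ⟨k-1, by omega⟩ := hhigh _
      rw [abs_le]
      constructor
      · push_cast; rw [hL, hU]; linarith [h2]
      · push_cast; rw [hL, hU]; linarith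
    · -- θ = α j
      refine ⟨0, ?_⟩
      have hji : α ⟨i.val + 1, h⟩ ≤ α j := hmono.monotone (by rw [Fin.le_def]; simpa)
      have hjK : α j ≤ α ⟨k-1, by omega⟩ := hhigh j
      have hi0 : 0 ≤ α i := le_trans h0 (hlow i)
      rw [abs_le]
      constructor
      · push_cast; rw [hL, hU]; linarith
      · push_cast; rw [hL, hU]; linarith [h2]
  · by_contra hcon
    push_neg at hcon
    set L := α ⟨0, hk⟩ with hL
    set U := α ⟨k-1, by omega⟩ with hU
    have hLU : U - L < 4*π/3 := by rw [hU, hL]; linarith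
    have hLleU : L ≤ U := by rw [hU, hL]; exact hlow _
    apply key_lemma k α ((L+U)/2) ((U-L)/2) (by linarith) (by linarith) ?_ hhull
    intro j
    refine ⟨0, ?_⟩
    have := hlow j
    have := hhigh j
    rw [abs_le]
    constructor
    · push_cast; rw [hL]; linarith
    · push_cast; rw [hU]; linarith
end
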